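/- There exists N such that for every even n ≥ N the following holds: if G is a typical simple 3-regular graph on n vertices and (V1, V2) is a minimal bisection of G, then for each i ∈ {1, 2} the number of vertices of degree exactly one in G[V_i] is at most 19. -/

import Mathlib

open SimpleGraph

/-- The number of edges of `G` with one endpoint in `V1` and the other in `V2`. -/
noncomputable def cutSize {V : Type*} (G : SimpleGraph V) (V1 V2 : Set V) : ℕ :=
  {p : V × V | p.1 ∈ V1 ∧ p.2 ∈ V2 ∧ G.Adj p.1 p.2}.ncard

/-- `(V1, V2)` is a bisection: a partition of the vertex set into two parts of equal size. -/
def IsBisection {V : Type*} (V1 V2 : Set V) : Prop :=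
  V1 ∪ V2 = Set.univ ∧ Disjoint V1 V2 ∧ V1.ncard = V2.ncard

/-- The bisection width of `G`: the minimum size of a bisection. -/
noncomputable def bisectionWidth {V : Type*} (G : SimpleGraph V) : ℕ :=
  sInf {m : ℕ | ∃ V1 V2 : Set V, IsBisection V1 V2 ∧ cutSize G V1 V2 = m}

/-- A minimal bisection: a bisection whose size equals the bisection width. -/
def IsMinimalBisection {V : Type*} (G : SimpleGraph V) (V1 V2 : Set V) : Prop :=
  IsBisection V1 V2 ∧ cutSize G V1 V2 = bisectionWidth G

/-- `G` is (simple) 3-regular: every vertex has exactly 3 neighbours. -/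
def IsCubic {V : Type*} (G : SimpleGraph V) : Prop :=
  ∀ v : V, (G.neighborSet v).ncard = 3

/-- `v` lies on a cycle of length `ℓ` in `G`. -/
def OnCycleOfLength {V : Type*} (G : SimpleGraph V) (ℓ : ℕ) (v : V) : Prop :=
  ∃ (u : V) (w : G.Walk u u), w.IsCycle ∧ w.length = ℓ ∧ v ∈ w.support

/-- A 3-regular graph on `n` vertices is typical if its bisection width is at least `0.10·n`
and, for every `ℓ ≤ 20`, at most `log n` vertices lie on a cycle of length `ℓ`. -/
def Typical {n : ℕ} (G : SimpleGraph (Fin n)) : Prop :=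
  (0.10 * (n : ℝ) ≤ (bisectionWidth G : ℝ)) ∧
  ∀ ℓ : ℕ, ℓ ≤ 20 → (({v : Fin n | OnCycleOfLength G ℓ v}).ncard : ℝ) ≤ Real.log n

/-- The degree of a vertex of the induced subgraph `G[S]`. -/
noncomputable def inducedDegree {V : Type*} (G : SimpleGraph V) (S : Set V) (v : S) : ℕ :=
  ((G.induce S).neighborSet v).ncard

/-!
Suppose one side `V₁` of a minimal bisection has at least 20 leaves, i.e. vertices of degree
one in `G[V₁]`. Exchanging a vertex `z ∈ V₂` with a leaf of `V₁` not adjacent to `z` shows that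
`G[V₂]` has minimum degree at least 2, so the cut consists of one edge at each vertex of the set
`A` of degree-2 vertices of `G[V₂]`, and `|A| = bw(G) ≥ n/10`. Two distinct vertices of `A` at
distance at most 12 in `G[V₂]` are impossible: exchanging a shortest path between them with as
many leaves of `V₁` would produce a smaller bisection. Hence the radius-6 balls of `G[V₂]` around
vertices of `A` are disjoint, and each of them either contains 7 vertices or reaches a cycle of
length at most 6. This gives `|A| ≤ n/14 + 7 log n`, which is incompatible with `|A| ≥ n/10` for
large `n`.
-/

open Finset

namespace SimpleGraph

variable {V : Type*} {G : SimpleGraph V}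

section NearIn

variable (G) in
def NearIn (S : Finset V) (d : ℕ) (v w : V) : Prop :=
  ∃ p : G.Walk v w, (∀ x ∈ p.support, x ∈ S) ∧ p.length ≤ d

variable {S : Finset V} {d d' : ℕ} {u v w : V}

lemma NearIn.symm (h : G.NearIn S d v w) : G.NearIn S d w v := by
  obtain ⟨p, hpS, hpd⟩ := h
  exact ⟨p.reverse, by simpa using hpS, by simpa using hpd⟩

lemma NearIn.trans (h : G.NearIn S d u v) (h' : G.NearIn S d' v w) :
    G.NearIn S (d + d') u w := by
  obtain ⟨p, hpS, hpd⟩ := h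
  obtain ⟨q, hqS, hqd⟩ := h'
  refine ⟨p.append q, fun x hx => ?_, by rw [Walk.length_append]; omega⟩
  rcases (Walk.mem_support_append_iff _ _).1 hx with hx | hx
  exacts [hpS x hx, hqS x hx]

lemma NearIn.mono (h : G.NearIn S d v w) (hd : d ≤ d') : G.NearIn S d' v w :=
  let ⟨p, hpS, hpd⟩ := h
  ⟨p, hpS, hpd.trans hd⟩

lemma nearIn_of_mem_support [DecidableEq V] {p : G.Walk v w} (hpS : ∀ x ∈ p.support, x ∈ S)
    (hu : u ∈ p.support) : G.NearIn S p.length v u :=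
  ⟨p.takeUntil u hu, fun x hx => hpS x (p.support_takeUntil_subset_support hu hx),
    p.length_takeUntil_le_length hu⟩

end NearIn

section Counting

variable [DecidableRel G.Adj] {S T : Finset V}

variable (G) in
def degIn (S : Finset V) (v : V) : ℕ := #{u ∈ S | G.Adj v u}

lemma card_interedges_eq_sum_degIn (S T : Finset V) :
    #(G.interedges S T) = ∑ v ∈ S, G.degIn T v := by
  rw [interedges_def, card_filter, sum_product]
  simp only [degIn, card_filter]

lemma card_interedges_comm (S T : Finset V) : #(G.interedges S T) = #(G.interedges T S) :=
  have := G.symm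
  Rel.card_interedges_comm S T

lemma card_interedges_singleton_left (v : V) (T : Finset V) :
    #(G.interedges {v} T) = G.degIn T v := by
  rw [card_interedges_eq_sum_degIn, sum_singleton]

variable [DecidableEq V]

lemma degIn_union (h : Disjoint S T) (v : V) :
    G.degIn (S ∪ T) v = G.degIn S v + G.degIn T v := by
  rw [degIn, filter_union, card_union_of_disjoint (disjoint_filter_filter h)]; rfl

lemma degIn_erase_of_not_adj {u v : V} (h : ¬G.Adj v u) :
    G.degIn (S.erase u) v = G.degIn S v := by
  rw [degIn, filter_erase, erase_eq_of_notMem (by simp [h])]; rfl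

lemma degIn_add_degIn_compl [Fintype V] (S : Finset V) (v : V) :
    G.degIn S v + G.degIn Sᶜ v = G.degree v := by
  rw [← degIn_union disjoint_compl_right, union_compl, ← card_neighborFinset_eq_degree,
    neighborFinset_eq_filter]
  rfl

lemma card_interedges_union_left (h : Disjoint S T) (U : Finset V) :
    #(G.interedges (S ∪ T) U) = #(G.interedges S U) + #(G.interedges T U) := by
  simp only [card_interedges_eq_sum_degIn, sum_union h]

lemma card_interedges_union_right (U : Finset V) (h : Disjoint S T) :
    #(G.interedges U (S ∪ T)) = #(G.interedges U S) + #(G.interedges U T) := by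
  rw [card_interedges_comm, card_interedges_union_left h, card_interedges_comm S,
    card_interedges_comm T]

lemma card_interedges_union_self (h : Disjoint S T) :
    #(G.interedges (S ∪ T) (S ∪ T)) =
      #(G.interedges S S) + #(G.interedges T T) + 2 * #(G.interedges S T) := by
  rw [card_interedges_union_left h, card_interedges_union_right _ h,
    card_interedges_union_right _ h, card_interedges_comm T S]
  ring

lemma sum_degree_eq_card_interedges [Fintype V] (S : Finset V) :
    ∑ v ∈ S, G.degree v = #(G.interedges S S) + #(G.interedges S Sᶜ) := by
  simp only [card_interedges_eq_sum_degIn, ← sum_add_distrib, degIn_add_degIn_compl]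

lemma Walk.IsPath.two_mul_length_le_card_interedges {u v : V} {p : G.Walk u v}
    (hp : p.IsPath) : 2 * p.length ≤ #(G.interedges p.support.toFinset p.support.toFinset) := by
  induction p with
  | nil => simp
  | @cons a b c hab q ih =>
    rw [Walk.cons_isPath_iff] at hp
    have hdisj : Disjoint q.support.toFinset {a} := by simpa using hp.2
    have hba : 0 < #(G.interedges q.support.toFinset {a}) :=
      card_pos.2 ⟨(b, a), by simp [mk_mem_interedges_iff, hab.symm]⟩
    rw [Walk.support_cons, List.toFinset_cons, insert_eq, union_comm,
      card_interedges_union_self hdisj, Walk.length_cons]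
    have := ih hp.1
    omega

end Counting

end SimpleGraph

open SimpleGraph

section Bisection

variable {V : Type*}

lemma cutSize_comm (G : SimpleGraph V) (V1 V2 : Set V) : cutSize G V1 V2 = cutSize G V2 V1 := by
  rw [cutSize, ← Set.ncard_image_of_injective _ Prod.swap_injective, cutSize]
  congr 1
  ext ⟨a, b⟩
  simp [G.adj_comm, and_left_comm]

lemma IsBisection.symm {V1 V2 : Set V} (h : IsBisection V1 V2) : IsBisection V2 V1 :=
  ⟨Set.union_comm V1 V2 ▸ h.1, h.2.1.symm, h.2.2.symm⟩

lemma IsBisection.eq_compl {V1 V2 : Set V} (h : IsBisection V1 V2) : V2 = V1ᶜ :=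
  (IsCompl.compl_eq ⟨h.2.1, codisjoint_iff.2 h.1⟩).symm

lemma IsMinimalBisection.symm {G : SimpleGraph V} {V1 V2 : Set V}
    (h : IsMinimalBisection G V1 V2) : IsMinimalBisection G V2 V1 :=
  ⟨h.1.symm, cutSize_comm G V2 V1 ▸ h.2⟩

variable {G : SimpleGraph V} [DecidableRel G.Adj]

lemma cutSize_coe (S T : Finset V) : cutSize G ↑S ↑T = #(G.interedges S T) := by
  rw [cutSize, ← Set.ncard_coe_finset]
  congr 1
  ext ⟨a, b⟩
  simp [mk_mem_interedges_iff]

variable [Fintype V] [DecidableEq V] {F : Finset V}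

lemma isBisection_coe_compl_iff : IsBisection (↑F : Set V) ↑Fᶜ ↔ 2 * #F = Fintype.card V := by
  rw [IsBisection, Set.ncard_coe_finset, Set.ncard_coe_finset, card_compl, coe_compl]
  simp only [Set.union_compl_self, disjoint_compl_right, true_and]
  have := card_le_univ F
  omega

lemma IsMinimalBisection.card_interedges_le {d : ℕ} (hG : G.IsRegularOfDegree d)
    (hmin : IsMinimalBisection G ↑F ↑Fᶜ) {W : Finset V} (hW : #W = #F) :
    #(G.interedges W W) ≤ #(G.interedges F F) := by
  have hbw : bisectionWidth G ≤ #(G.interedges W Wᶜ) :=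
    Nat.sInf_le ⟨↑W, ↑Wᶜ,
      isBisection_coe_compl_iff.2 (hW ▸ isBisection_coe_compl_iff.1 hmin.1), cutSize_coe W Wᶜ⟩
  rw [← hmin.2, cutSize_coe] at hbw
  have hF := G.sum_degree_eq_card_interedges F
  have hW' := G.sum_degree_eq_card_interedges W
  simp only [hG.degree_eq, sum_const, smul_eq_mul, hW] at hF hW'
  omega

/-- In a regular graph the cut of a side `W` is `d |W|` minus the edges inside `W`, so exchanging
`T ⊆ F` with `P ⊆ Fᶜ` creates at most as many edges inside the new side `(F \ T) ∪ P` as it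
destroys (edges counted as ordered pairs). -/
lemma IsMinimalBisection.exchange {d : ℕ} (hG : G.IsRegularOfDegree d)
    (hmin : IsMinimalBisection G ↑F ↑Fᶜ) {T P : Finset V} (hT : T ⊆ F) (hP : P ⊆ Fᶜ)
    (hTP : #T = #P) :
    #(G.interedges P P) + 2 * #(G.interedges P (F \ T)) ≤ 2 * ∑ u ∈ T, G.degIn F u := by
  have hdisj : Disjoint (F \ T) P :=
    disjoint_of_subset_left sdiff_subset (subset_compl_iff_disjoint_left.1 hP)
  have hcard : #((F \ T) ∪ P) = #F := by
    rw [card_union_of_disjoint hdisj, card_sdiff_of_subset hT]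
    have := card_le_card hT
    omega
  have hle := hmin.card_interedges_le hG hcard
  rw [card_interedges_union_self hdisj, card_interedges_comm (F \ T) P] at hle
  have hF := card_interedges_union_self (G := G) (sdiff_disjoint (s := T) (t := F))
  have hTF : ∑ u ∈ T, G.degIn F u = #(G.interedges (F \ T) T) + #(G.interedges T T) := by
    rw [← card_interedges_eq_sum_degIn, card_interedges_comm,
      ← card_interedges_union_left (sdiff_disjoint (s := T) (t := F)), sdiff_union_of_subset hT]
  rw [sdiff_union_of_subset hT] at hF
  omega

end Bisection

section Cubic

variable {V : Type*} [Fintype V] {G : SimpleGraph V} [DecidableRel G.Adj]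

lemma IsCubic.isRegularOfDegree (h : IsCubic G) : G.IsRegularOfDegree 3 := fun v => by
  rw [← card_neighborFinset_eq_degree, ← h v, ← Set.ncard_coe_finset, coe_neighborFinset]

variable [DecidableEq V] {F : Finset V}

lemma IsMinimalBisection.two_le_degIn_compl (hG : G.IsRegularOfDegree 3)
    (hmin : IsMinimalBisection G ↑F ↑Fᶜ) (hleaves : 4 ≤ #{v ∈ F | G.degIn F v = 1}) {z : V}
    (hz : z ∈ Fᶜ) : 2 ≤ G.degIn Fᶜ z := by
  by_contra! hlt
  have hzF : 2 ≤ G.degIn F z := by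
    have := G.degIn_add_degIn_compl F z
    rw [hG.degree_eq] at this
    omega
  obtain ⟨u, hu, hzu⟩ : ∃ u ∈ {v ∈ F | G.degIn F v = 1}, u ∉ G.neighborFinset z := by
    by_contra! h
    have := card_le_card (show _ ⊆ G.neighborFinset z from h)
    rw [card_neighborFinset_eq_degree, hG.degree_eq] at this
    omega
  rw [mem_filter] at hu
  rw [mem_neighborFinset] at hzu
  have := hmin.exchange hG (T := {u}) (P := {z}) (by simpa using hu.1) (by simpa using hz) rfl
  rw [sum_singleton, hu.2, card_interedges_singleton_left, card_interedges_singleton_left,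
    sdiff_singleton_eq_erase, degIn_erase_of_not_adj hzu] at this
  omega

lemma card_interedges_compl_eq_card (hG : G.IsRegularOfDegree 3) {S : Finset V}
    (hS : ∀ z ∈ S, 2 ≤ G.degIn S z) : #(G.interedges S Sᶜ) = #{z ∈ S | G.degIn S z = 2} := by
  rw [card_interedges_eq_sum_degIn, card_filter]
  refine sum_congr rfl fun z hz => ?_
  have hsplit := G.degIn_add_degIn_compl S z
  rw [hG.degree_eq] at hsplit
  have := hS z hz
  split_ifs <;> omega

lemma exists_mem_adj_of_degIn_compl_eq_two (hG : G.IsRegularOfDegree 3) {v : V}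
    (hv : G.degIn Fᶜ v = 2) : ∃ x ∈ F, G.Adj v x := by
  have hsplit := G.degIn_add_degIn_compl F v
  rw [hG.degree_eq] at hsplit
  have hpos : 0 < G.degIn F v := by omega
  obtain ⟨x, hx⟩ := card_pos.1 hpos
  exact ⟨x, (mem_filter.1 hx).1, (mem_filter.1 hx).2⟩

/-- Exchanging a path `P` of `G[Fᶜ]` from `w` to `w'` with `|P|` leaves of `G[F]` other than the
`F`-neighbours of `w` and `w'` would make the cut smaller: the new side loses at most the `|P|`
edges at the leaves, but gains the `|P| - 1` edges of `P` and the edges from `w` and `w'` to `F`. -/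
lemma IsMinimalBisection.eq_of_nearIn (hG : G.IsRegularOfDegree 3)
    (hmin : IsMinimalBisection G ↑F ↑Fᶜ) {w w' : V} {d : ℕ} (hw : G.degIn Fᶜ w = 2)
    (hw' : G.degIn Fᶜ w' = 2) (hnear : G.NearIn Fᶜ d w w')
    (hleaves : d + 3 ≤ #{v ∈ F | G.degIn F v = 1}) : w = w' := by
  by_contra hne
  obtain ⟨p, hpS, hpd⟩ := hnear
  have hq : p.bypass.IsPath := p.bypass_isPath
  set P := p.bypass.support.toFinset
  have hPcard : #P = p.bypass.length + 1 := by
    rw [List.toFinset_card_of_nodup hq.support_nodup, Walk.length_support]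
  have hPF : P ⊆ Fᶜ := fun x hx =>
    hpS x (p.support_bypass_subset_support (List.mem_toFinset.1 hx))
  have hlen : p.bypass.length ≤ d := p.length_bypass_le_length.trans hpd
  obtain ⟨x, hxF, hwx⟩ := exists_mem_adj_of_degIn_compl_eq_two hG hw
  obtain ⟨x', hx'F, hwx'⟩ := exists_mem_adj_of_degIn_compl_eq_two hG hw'
  obtain ⟨T, hT, hTcard⟩ : ∃ T ⊆ {v ∈ F | G.degIn F v = 1} \ {x, x'}, #T = #P := by
    refine exists_subset_card_eq ?_
    have := le_card_sdiff {x, x'} {v ∈ F | G.degIn F v = 1}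
    have := card_le_two (a := x) (b := x')
    omega
  have hTF : T ⊆ F := fun u hu => (mem_filter.1 (mem_sdiff.1 (hT hu)).1).1
  have hxT : ∀ y ∈ F, y ∈ ({x, x'} : Finset V) → y ∈ F \ T := fun y hy hyx =>
    mem_sdiff.2 ⟨hy, fun hyT => (mem_sdiff.1 (hT hyT)).2 hyx⟩
  have hcross : 1 < #(G.interedges P (F \ T)) := by
    refine one_lt_card.2 ⟨(w, x), ?_, (w', x'), ?_, fun h => hne (congrArg Prod.fst h)⟩
    · exact (mk_mem_interedges_iff G).2 ⟨by simp [P], hxT x hxF (by simp), hwx⟩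
    · exact (mk_mem_interedges_iff G).2 ⟨by simp [P], hxT x' hx'F (by simp), hwx'⟩
  have hsum : ∑ u ∈ T, G.degIn F u = #T :=
    (sum_const_nat fun u hu => (mem_filter.1 (mem_sdiff.1 (hT hu)).1).2).trans (mul_one _)
  have := hmin.exchange hG hTF hPF hTcard
  have hPP : 2 * p.bypass.length ≤ #(G.interedges P P) := hq.two_mul_length_le_card_interedges
  omega

end Cubic

namespace SimpleGraph

section ShortCycles

variable {V : Type*} [DecidableEq V] {G : SimpleGraph V} [DecidableRel G.Adj] {S : Finset V}

/-- A path that cannot be extended at its start `a` closes a short cycle through `a`: some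
neighbour `z` of `a` other than the second vertex of the path lies on the path. -/
lemma Walk.IsPath.exists_extend_or_isCycle {a w : V} {p : G.Walk a w} (hp : p.IsPath)
    (ha : 2 ≤ G.degIn S a) :
    (∃ b ∈ S, G.Adj a b ∧ b ∉ p.support) ∨
      ∃ c : G.Walk a a, c.IsCycle ∧ c.length ≤ p.length + 1 := by
  obtain ⟨x, hx, y, hy, hxy⟩ := one_lt_card.1 (show 1 < #{u ∈ S | G.Adj a u} from ha)
  rw [mem_filter] at hx hy
  by_cases hxp : x ∉ p.support
  · exact Or.inl ⟨x, hx.1, hx.2, hxp⟩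
  by_cases hyp : y ∉ p.support
  · exact Or.inl ⟨y, hy.1, hy.2, hyp⟩
  rw [not_not] at hxp hyp
  obtain ⟨z, hza, hzp, hzs⟩ : ∃ z, G.Adj a z ∧ z ∈ p.support ∧ z ≠ p.snd := by
    by_cases hxs : x = p.snd
    · exact ⟨y, hy.2, hyp, fun h => hxy (hxs.trans h.symm)⟩
    · exact ⟨x, hx.2, hxp, hxs⟩
  refine Or.inr ⟨Walk.cons hza (p.takeUntil z hzp).reverse, ?_, ?_⟩
  · rw [Walk.cons_isCycle_iff, Walk.edges_reverse, List.mem_reverse]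
    exact ⟨(hp.takeUntil hzp).reverse, fun h =>
      hzs (hp.eq_snd_of_mem_edges (p.edges_takeUntil_subset_edges hzp h))⟩
  · rw [Walk.length_cons, Walk.length_reverse]
    exact Nat.succ_le_succ (p.length_takeUntil_le_length hzp)

variable (hS : ∀ z ∈ S, 2 ≤ G.degIn S z)
include hS

lemma exists_isPath_or_nearIn_isCycle {w : V} (hw : w ∈ S) : ∀ k : ℕ,
    (∃ (a : V) (p : G.Walk a w), p.IsPath ∧ (∀ x ∈ p.support, x ∈ S) ∧ p.length = k) ∨
      ∃ a, G.NearIn S k w a ∧ ∃ c : G.Walk a a, c.IsCycle ∧ c.length ≤ k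
  | 0 => Or.inl ⟨w, .nil, .nil, by simpa using hw, rfl⟩
  | k + 1 => by
    rcases exists_isPath_or_nearIn_isCycle hw k with
      ⟨a, p, hp, hpS, rfl⟩ | ⟨a, ha, c, hc, hck⟩
    · have hrev : G.NearIn S p.length w a := by
        simpa using nearIn_of_mem_support (p := p.reverse) (by simpa using hpS)
          p.reverse.end_mem_support
      rcases hp.exists_extend_or_isCycle (hS a (hpS a p.start_mem_support)) with
        ⟨b, hbS, hab, hbp⟩ | ⟨c, hc, hck⟩
      · refine Or.inl ⟨b, .cons hab.symm p, hp.cons hbp, fun x hx => ?_, rfl⟩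
        rcases List.mem_cons.1 (Walk.support_cons _ _ ▸ hx) with rfl | hx
        exacts [hbS, hpS x hx]
      · exact Or.inr ⟨a, hrev.mono p.length.le_succ, c, hc, hck⟩
    · exact Or.inr ⟨a, ha.mono k.le_succ, c, hc, hck.trans k.le_succ⟩

lemma le_card_nearIn_or_exists_nearIn_onCycle {w : V} (hw : w ∈ S) (k : ℕ)
    [DecidablePred (G.NearIn S k w)] :
    k + 1 ≤ #{v ∈ S | G.NearIn S k w v} ∨
      ∃ v, G.NearIn S k w v ∧ ∃ ℓ ≤ k, OnCycleOfLength G ℓ v := by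
  rcases exists_isPath_or_nearIn_isCycle hS hw k with
    ⟨a, p, hp, hpS, rfl⟩ | ⟨a, ha, c, hc, hck⟩
  · left
    calc p.length + 1 = #p.support.toFinset := by
          rw [List.toFinset_card_of_nodup hp.support_nodup, Walk.length_support]
      _ ≤ #{v ∈ S | G.NearIn S p.length w v} := card_le_card fun v hv => by
          have hv : v ∈ p.reverse.support := by simpa using hv
          exact mem_filter.2 ⟨hpS v (by simpa using hv),
            by simpa using nearIn_of_mem_support (p := p.reverse) (by simpa using hpS) hv⟩
  · exact Or.inr ⟨a, ha, c.length, hck, a, c, hc, rfl, c.start_mem_support⟩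

/-- If the vertices of `A` are pairwise at distance more than `2k` in `G[S]`, their radius-`k`
balls are disjoint; those containing no cycle of length at most `k` have at least `k + 1`
vertices, and each of the others contains its own vertex of such a cycle. -/
lemma card_le_of_pairwise_not_nearIn [Fintype V] {A : Finset V} (hA : A ⊆ S) (k : ℕ)
    (hsep : ∀ w ∈ A, ∀ w' ∈ A, G.NearIn S (k + k) w w' → w = w') :
    (k + 1) * #A ≤ #S + (k + 1) * {v | ∃ ℓ ≤ k, OnCycleOfLength G ℓ v}.ncard := by
  classical
  set C := {v | ∃ ℓ ≤ k, OnCycleOfLength G ℓ v}.toFinset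
  set B := {w ∈ A | ∃ v ∈ C, G.NearIn S k w v}
  have hsep' : ∀ v, ∀ w ∈ A, ∀ w' ∈ A, G.NearIn S k w v → G.NearIn S k w' v → w = w' :=
    fun v w hw w' hw' h h' => hsep w hw w' hw' (h.trans h'.symm)
  have hB : #B ≤ #C := card_le_card_of_forall_subsingleton (G.NearIn S k)
    (fun w hw => by obtain ⟨v, hvC, hv⟩ := (mem_filter.1 hw).2; exact ⟨v, hvC, hv⟩)
    (fun v _ w hw w' hw' =>
      hsep' v w (mem_filter.1 hw.1).1 w' (mem_filter.1 hw'.1).1 hw.2 hw'.2)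
  have hAB : #(A \ B) * (k + 1) ≤ #S * 1 := card_mul_le_card_mul (G.NearIn S k)
    (fun w hw => by
      obtain ⟨hwA, hwB⟩ := mem_sdiff.1 hw
      refine (le_card_nearIn_or_exists_nearIn_onCycle hS (hA hwA) k).resolve_right ?_
      rintro ⟨v, hv, hvC⟩
      exact hwB (mem_filter.2 ⟨hwA, v, by simpa [C] using hvC, hv⟩))
    (fun v _ => card_le_one.2 fun w hw w' hw' => by
      rw [mem_bipartiteBelow] at hw hw'
      exact hsep' v w (mem_sdiff.1 hw.1).1 w' (mem_sdiff.1 hw'.1).1 hw.2 hw'.2)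
  have hsplit : #(A \ B) + #B = #A := card_sdiff_add_card_eq_card (filter_subset _ A)
  rw [Set.ncard_eq_toFinset_card']
  change _ ≤ _ + (k + 1) * #C
  nlinarith

end ShortCycles

end SimpleGraph

lemma Typical.ncard_onCycle_le {n : ℕ} {G : SimpleGraph (Fin n)} (h : Typical G) {k : ℕ}
    (hk : k ≤ 20) :
    ({v | ∃ ℓ ≤ k, OnCycleOfLength G ℓ v}.ncard : ℝ) ≤ (k + 1) * Real.log n := by
  have hunion : {v | ∃ ℓ ≤ k, OnCycleOfLength G ℓ v} =
      ⋃ ℓ ∈ range (k + 1), {v | OnCycleOfLength G ℓ v} := by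
    ext v
    simp
  calc ({v | ∃ ℓ ≤ k, OnCycleOfLength G ℓ v}.ncard : ℝ)
      ≤ ∑ ℓ ∈ range (k + 1), ({v | OnCycleOfLength G ℓ v}.ncard : ℝ) := by
        rw [hunion]
        exact_mod_cast set_ncard_biUnion_le _ _
    _ ≤ ∑ _ℓ ∈ range (k + 1), Real.log n :=
        sum_le_sum fun ℓ hℓ => h.2 ℓ (by rw [mem_range] at hℓ; omega)
    _ = (k + 1) * Real.log n := by simp

lemma mul_log_lt_self {x : ℝ} (hx : 250000 ≤ x) : 245 * Real.log x < x := by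
  have hsq := Real.sq_sqrt (by linarith : 0 ≤ x)
  have hsqrt : 500 ≤ √x := Real.le_sqrt_of_sq_le (by linarith)
  have hlog : Real.log x ≤ 2 * (√x - 1) := by
    have := Real.log_sqrt (by linarith : 0 ≤ x)
    have := Real.log_le_sub_one_of_pos (by linarith : 0 < √x)
    linarith
  nlinarith

lemma IsMinimalBisection.card_degIn_eq_one_le {n : ℕ} {G : SimpleGraph (Fin n)}
    [DecidableRel G.Adj] (hG : G.IsRegularOfDegree 3) (htyp : Typical G) {F : Finset (Fin n)}
    (hmin : IsMinimalBisection G ↑F ↑Fᶜ) (hn : 250000 ≤ n) :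
    #{v ∈ F | G.degIn F v = 1} ≤ 19 := by
  by_contra! hleaves
  have hS : ∀ z ∈ Fᶜ, 2 ≤ G.degIn Fᶜ z := fun _ hz =>
    hmin.two_le_degIn_compl hG (by omega) hz
  set A := {z ∈ Fᶜ | G.degIn Fᶜ z = 2}
  have hA : (0.10 : ℝ) * n ≤ #A := by
    have hbw : bisectionWidth G = #A := by
      rw [← hmin.2, cutSize_coe, card_interedges_comm, ← card_interedges_compl_eq_card hG hS,
        compl_compl]
    exact hbw ▸ htyp.1
  have hballs := card_le_of_pairwise_not_nearIn hS (filter_subset _ _) 6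
    fun w hw w' hw' hnear => hmin.eq_of_nearIn hG (mem_filter.1 hw).2 (mem_filter.1 hw').2 hnear
      (by omega)
  have hcycles := htyp.ncard_onCycle_le (k := 6) (by norm_num)
  have hhalf : 2 * #Fᶜ = n := by
    have := isBisection_coe_compl_iff.1 hmin.1
    rw [card_compl]
    simp only [Fintype.card_fin] at this ⊢
    omega
  -- `n/10 - n/14 = n/35`, and `35 · 7 = 245`.
  have hlog := mul_log_lt_self (x := n) (by exact_mod_cast hn)
  have hballs' : (7 : ℝ) * #A ≤ #Fᶜ + 7 * {v | ∃ ℓ ≤ 6, OnCycleOfLength G ℓ v}.ncard := by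
    exact_mod_cast hballs
  have hhalf' : (2 : ℝ) * #Fᶜ = n := by exact_mod_cast hhalf
  push_cast at hcycles
  linarith

lemma inducedDegree_coe_eq_degIn {V : Type*} {G : SimpleGraph V} [DecidableRel G.Adj]
    (S : Finset V) (v : (S : Set V)) : inducedDegree G S v = G.degIn S v := by
  rw [inducedDegree, degIn, ← Set.ncard_image_of_injective _ Subtype.val_injective,
    ← Set.ncard_coe_finset]
  congr 1
  ext u
  simp [and_comm]

lemma ncard_inducedDegree_coe_eq_one {V : Type*} {G : SimpleGraph V} [DecidableRel G.Adj]
    (S : Finset V) :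
    {v : (S : Set V) | inducedDegree G S v = 1}.ncard = #{v ∈ S | G.degIn S v = 1} := by
  rw [← Set.ncard_image_of_injective _ Subtype.val_injective, ← Set.ncard_coe_finset]
  congr 1
  ext v
  simp [inducedDegree_coe_eq_degIn, and_comm]

lemma IsMinimalBisection.ncard_inducedDegree_eq_one_le {n : ℕ} {G : SimpleGraph (Fin n)}
    (hG : IsCubic G) (htyp : Typical G) {V1 V2 : Set (Fin n)}
    (hmin : IsMinimalBisection G V1 V2) (hn : 250000 ≤ n) :
    {v : V1 | inducedDegree G V1 v = 1}.ncard ≤ 19 := by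
  classical
  obtain ⟨F, rfl⟩ : ∃ F : Finset (Fin n), ↑F = V1 := ⟨V1.toFinset, Set.coe_toFinset V1⟩
  obtain rfl : V2 = ↑Fᶜ := by rw [coe_compl]; exact hmin.1.eq_compl
  rw [ncard_inducedDegree_coe_eq_one]
  exact hmin.card_degIn_eq_one_le hG.isRegularOfDegree htyp hn

/-- For all large enough even `n`: in any typical 3-regular graph on `n` vertices with a
minimal bisection `(V1, V2)`, each side contains at most 19 vertices of degree exactly one
in the induced subgraph. -/
theorem statement7 :
    ∃ N : ℕ, ∀ n : ℕ, N ≤ n → Even n →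
      ∀ G : SimpleGraph (Fin n), IsCubic G → Typical G →
        ∀ V1 V2 : Set (Fin n), IsMinimalBisection G V1 V2 →
          ({v : V1 | inducedDegree G V1 v = 1}).ncard ≤ 19 ∧
          ({v : V2 | inducedDegree G V2 v = 1}).ncard ≤ 19 :=
  ⟨250000, fun _ hn _ _ hG htyp _ _ hmin =>
    ⟨hmin.ncard_inducedDegree_eq_one_le hG htyp hn,
      hmin.symm.ncard_inducedDegree_eq_one_le hG htyp hn⟩⟩
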